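/- For any function f : B → B and all x, y ∈ B, the variation of f from x to y satisfies δf(x → y) = xnor(δ(x → y), f'(x)), where xnor is taken in the three-valued logic M. -/

import Mathlib

/-- The three-valued logic `M = {T, 0, F}`. -/
inductive Tri where
  | T : Tri
  | Z : Tri
  | F : Tri
deriving DecidableEq

/-- Negation in `M`, with `¬0 = 0`. -/
def Tri.neg : Tri → Tri
  | .T => .F
  | .Z => .Z
  | .F => .T

/-- XNOR in `M`: `0` if either argument is `0`, otherwise the Boolean XNOR. -/
def Tri.xnor : Tri → Tri → Tri
  | .Z, _ => .Z
  | _, .Z => .Z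
  | a, b => if a = b then .T else .F

/-- Inclusion of the Boolean set `B = {T, F}` into `M`. -/
def Tri.ofBool : Bool → Tri
  | true => .T
  | false => .F

/-- Variation `δ(x → y)` of a Boolean `x` to `y`, with order `F < T`
(`false < true`): `T` if `y > x`, `0` if `y = x`, `F` if `y < x`. -/
def bvar (x y : Bool) : Tri :=
  if x = y then .Z else if y then .T else .F

/-- Variation of `f : B → B`: `f'(x) = xnor(δ(x → ¬x), δ(f x → f ¬x))`. -/
def varB (f : Bool → Bool) (x : Bool) : Tri :=
  Tri.xnor (bvar x (!x)) (bvar (f x) (f (!x)))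

/-!
If `y = x` both sides are `0`. Otherwise `y = ¬x`, and since `δ(x → ¬x) ≠ 0`, xnor with it is an
involution on `M`, so `xnor(δ(x → ¬x), f'(x))` recovers `δf(x → ¬x)`.
-/

namespace Tri

@[simp]
theorem xnor_zero_left (a : Tri) : xnor .Z a = .Z := rfl

theorem xnor_xnor_cancel_left {a : Tri} (ha : a ≠ .Z) (b : Tri) : xnor a (xnor a b) = b := by
  cases a <;> cases b <;> first | exact absurd rfl ha | rfl

end Tri

@[simp]
theorem bvar_self (x : Bool) : bvar x x = .Z := if_pos rfl

theorem bvar_ne_zero_of_ne {x y : Bool} (h : x ≠ y) : bvar x y ≠ .Z := by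
  cases y <;> simp [bvar, h]

theorem bvar_apply (f : Bool → Bool) (x y : Bool) :
    bvar (f x) (f y) = Tri.xnor (bvar x y) (varB f x) := by
  rcases Bool.eq_or_eq_not y x with rfl | rfl
  · simp
  · exact (Tri.xnor_xnor_cancel_left (bvar_ne_zero_of_ne (Bool.self_ne_not x)) _).symm
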